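/- arXiv:0906.3363 — 2 statements merged into one kernel-verified Lean document; each statement's English description precedes it below -/
import Mathlib

section
/- Let R, S, H be complex matrices of compatible sizes with H Hermitian. There exists a matrix J such that H + [R* S*] [[0, J*],[J, 0]] [R; S] is negative definite if and only if R_⊥* H R_⊥ < 0 and S_⊥* H S_⊥ < 0, where R_⊥ and S_⊥ are injective matrices with ranges equal to ker R and ker S respectively. -/
/-!
Put `A = -H`, `U = ker R`, `W = ker S`. Necessity: compressing `-(H + RᴴJᴴS + SᴴJR)` to
`ker R` or `ker S` kills the `J`-terms. Sufficiency: it suffices to find `K` with `K U = 0`,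
`Kᴴ W = 0` and `A + K + Kᴴ > 0`, because such a `K` factors as `Sᴴ J R` (generalized inverses).
Split the space as `V₁ ⊕ V₂ ⊕ V₃ ⊕ V₄` with `V₁ = U ⊓ W`, `U = V₁ ⊕ V₂`, `W = V₁ ⊕ V₃`, and
`V₂ ⊕ V₃ ⊕ V₄` `A`-orthogonal to `V₁` (possible since `A > 0` on `V₁`). Such `K` may carry
arbitrary blocks `(2,3)`, `(2,4)`, `(4,3)`, `(4,4)`; use them to cancel the corresponding blocks of
`A` and to replace its `(4,4)` block by `1`. What is left is block diagonal with the positive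
blocks `A|V₁`, `A|V₂`, `A|V₃`, `1`.
-/

open Matrix
open scoped ComplexOrder

namespace Submodule

variable {K V : Type*} [DivisionRing K] [AddCommGroup V] [Module K V]

theorem exists_linearMap_of_disjoint {A B : Submodule K V} (h : Disjoint A B) :
    ∃ f : V →ₗ[K] V, (∀ x, f x ∈ A) ∧ (∀ x ∈ A, f x = x) ∧ ∀ x ∈ B, f x = 0 := by
  obtain ⟨B', hBB', hB'⟩ := h.symm.exists_isCompl
  exact ⟨A.projection B' hB'.symm, projection_apply_mem _, fun x hx ↦
    projection_apply_of_mem_left _ hx, fun x hx ↦ projection_apply_of_mem_right _ (hBB' hx)⟩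

theorem exists_disjoint_sup_eq {A U : Submodule K V} (h : A ≤ U) :
    ∃ U' ≤ U, Disjoint A U' ∧ A ⊔ U' = U := by
  obtain ⟨C, hC⟩ := A.exists_isCompl
  refine ⟨C ⊓ U, inf_le_right, hC.disjoint.mono_right inf_le_left, ?_⟩
  rw [← sup_inf_assoc_of_le C h, hC.sup_eq_top, top_inf_eq]

/-- Projections onto the summands `U'`, `W'`, `C` of a decomposition
`V = (U ⊓ W) ⊕ U' ⊕ W' ⊕ C` with `U = (U ⊓ W) ⊕ U'` and `W = (U ⊓ W) ⊕ W'`. -/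
theorem exists_projections (U W : Submodule K V) :
    ∃ p₂ p₃ p₄ : V →ₗ[K] V, (∀ x, p₂ x ∈ U) ∧ (∀ x, p₃ x ∈ W) ∧
      (∀ u ∈ U, p₃ u = 0 ∧ p₄ u = 0) ∧ (∀ w ∈ W, p₂ w = 0 ∧ p₄ w = 0) ∧
      ∀ x, x - p₂ x - p₃ x - p₄ x ∈ U ⊓ W := by
  obtain ⟨C, hC⟩ := (U ⊔ W).exists_isCompl
  obtain ⟨U', hU'U, hU'disj, hU'sup⟩ := exists_disjoint_sup_eq (inf_le_left : U ⊓ W ≤ U)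
  obtain ⟨W', hW'W, hW'disj, hW'sup⟩ := exists_disjoint_sup_eq (inf_le_right : U ⊓ W ≤ W)
  have hU'W : Disjoint U' (W ⊔ C) := by
    refine Disjoint.disjoint_sup_right_of_disjoint_sup_left ?_
      (hC.disjoint.mono_left (sup_le (hU'U.trans le_sup_left) le_sup_right))
    exact disjoint_iff_inf_le.mpr
      ((le_inf (le_inf (inf_le_left.trans hU'U) inf_le_right) inf_le_left).trans hU'disj.le_bot)
  have hW'U : Disjoint W' (U ⊔ C) := by
    refine Disjoint.disjoint_sup_right_of_disjoint_sup_left ?_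
      (hC.disjoint.mono_left (sup_le (hW'W.trans le_sup_right) le_sup_left))
    exact disjoint_iff_inf_le.mpr
      ((le_inf (le_inf inf_le_right (inf_le_left.trans hW'W)) inf_le_left).trans hW'disj.le_bot)
  obtain ⟨p₂, hp₂, hp₂U', hp₂0⟩ := exists_linearMap_of_disjoint hU'W
  obtain ⟨p₃, hp₃, hp₃W', hp₃0⟩ := exists_linearMap_of_disjoint hW'U
  obtain ⟨p₄, -, hp₄C, hp₄0⟩ := exists_linearMap_of_disjoint hC.symm.disjoint
  refine ⟨p₂, p₃, p₄, fun x ↦ hU'U (hp₂ x), fun x ↦ hW'W (hp₃ x),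
    fun u hu ↦ ⟨hp₃0 u (mem_sup_left hu), hp₄0 u (mem_sup_left hu)⟩,
    fun w hw ↦ ⟨hp₂0 w (mem_sup_left hw), hp₄0 w (mem_sup_right hw)⟩, fun x ↦ ?_⟩
  set r := LinearMap.id - p₂ - p₃ - p₄
  suffices ⊤ ≤ (U ⊓ W).comap r from this trivial
  have h₁ : U ⊓ W ≤ (U ⊓ W).comap r := fun y hy ↦ by
    simpa [r, hp₂0 y (mem_sup_left hy.2), hp₃0 y (mem_sup_left hy.1),
      hp₄0 y (mem_sup_left hy.1)] using hy
  have h₂ : U' ≤ (U ⊓ W).comap r := fun y hy ↦ by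
    simp [r, hp₂U' y hy, hp₃0 y (mem_sup_left (hU'U hy)), hp₄0 y (mem_sup_left (hU'U hy))]
  have h₃ : W' ≤ (U ⊓ W).comap r := fun y hy ↦ by
    simp [r, hp₂0 y (mem_sup_left (hW'W hy)), hp₃W' y hy, hp₄0 y (mem_sup_right (hW'W hy))]
  have h₄ : C ≤ (U ⊓ W).comap r := fun y hy ↦ by
    simp [r, hp₂0 y (mem_sup_right hy), hp₃0 y (mem_sup_right hy), hp₄C y hy]
  rw [← hC.sup_eq_top]
  exact sup_le (sup_le (hU'sup.ge.trans (sup_le h₁ h₂)) (hW'sup.ge.trans (sup_le h₁ h₃))) h₄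

end Submodule

namespace Matrix

section CommRing

variable {m n p q 𝕜 : Type*} [Fintype n] [CommRing 𝕜]

theorem mul_eq_zero_of_range_le_ker [Fintype m] {A : Matrix p n 𝕜} {B : Matrix n m 𝕜}
    (h : LinearMap.range B.mulVecLin ≤ LinearMap.ker A.mulVecLin) : A * B = 0 :=
  ext_iff_mulVec.mpr fun v ↦ by simpa [← mulVec_mulVec] using h ⟨v, rfl⟩

theorem conjTranspose_mul_add_add_mul_of_mul_eq_zero [StarRing 𝕜] [Fintype p] [Fintype q]
    {H : Matrix n n 𝕜} {R : Matrix p n 𝕜} {S : Matrix q n 𝕜} {J : Matrix q p 𝕜}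
    {B : Matrix n m 𝕜} (h : R * B = 0 ∨ S * B = 0) :
    Bᴴ * (H + Rᴴ * Jᴴ * S + Sᴴ * J * R) * B = Bᴴ * H * B := by
  calc Bᴴ * (H + Rᴴ * Jᴴ * S + Sᴴ * J * R) * B
      = Bᴴ * H * B + (R * B)ᴴ * Jᴴ * (S * B) + (S * B)ᴴ * J * (R * B) := by
        simp only [conjTranspose_mul, Matrix.mul_add, Matrix.add_mul, Matrix.mul_assoc]
    _ = Bᴴ * H * B := by rcases h with h | h <;> simp [h]

end CommRing

section Field

variable {l m n p q 𝕜 : Type*} [Fintype n] [Field 𝕜]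

theorem exists_injective_mulVecLin_range_eq (V : Submodule 𝕜 (n → 𝕜)) :
    ∃ (d : ℕ) (M : Matrix n (Fin d) 𝕜),
      Function.Injective M.mulVecLin ∧ LinearMap.range M.mulVecLin = V := by
  classical
  set f := V.subtype ∘ₗ (Module.finBasis 𝕜 V).equivFun.symm.toLinearMap
  have hf : (LinearMap.toMatrix' f).mulVecLin = f :=
    LinearMap.ext (LinearMap.toMatrix'_mulVec f)
  refine ⟨_, LinearMap.toMatrix' f, ?_, ?_⟩ <;> rw [hf]
  · exact V.subtype_injective.comp (LinearEquiv.injective _)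
  · rw [LinearMap.range_comp, LinearEquiv.range, Submodule.map_top, Submodule.range_subtype]

theorem exists_mul_mul_eq_self [Fintype m] (A : Matrix m n 𝕜) :
    ∃ G : Matrix n m 𝕜, A * G * A = A := by
  classical
  obtain ⟨s, hs⟩ := A.mulVecLin.rangeRestrict.exists_rightInverse_of_surjective
    (LinearMap.range_rangeRestrict _)
  obtain ⟨g, hg⟩ := LinearMap.exists_extend s
  refine ⟨LinearMap.toMatrix' g, ext_iff_mulVec.mpr fun v ↦ ?_⟩
  have hgs : g (A *ᵥ v) = s ⟨A *ᵥ v, v, rfl⟩ := congr($hg ⟨A *ᵥ v, v, rfl⟩)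
  have hAs := congr(Subtype.val ($hs ⟨A *ᵥ v, v, rfl⟩))
  simpa [← mulVec_mulVec, hgs] using hAs

theorem mul_mul_eq_of_ker_le [Fintype m] {A : Matrix m n 𝕜} {G : Matrix n m 𝕜} {B : Matrix l n 𝕜}
    (hG : A * G * A = A) (h : LinearMap.ker A.mulVecLin ≤ LinearMap.ker B.mulVecLin) :
    B * G * A = B := by
  refine ext_iff_mulVec.mpr fun v ↦ ?_
  have hv : A *ᵥ (G *ᵥ (A *ᵥ v) - v) = 0 := by
    rw [mulVec_sub, mulVec_mulVec, mulVec_mulVec, hG, sub_self]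
  have := h hv
  simp only [LinearMap.mem_ker, mulVecLin_apply, mulVec_sub, sub_eq_zero] at this
  rw [← mulVec_mulVec, ← mulVec_mulVec, this]

theorem exists_conjTranspose_mul_mul_eq [StarRing 𝕜] [Fintype l] [Fintype p] [Fintype q]
    {R : Matrix p n 𝕜} {S : Matrix q l 𝕜} {K : Matrix l n 𝕜}
    (hR : LinearMap.ker R.mulVecLin ≤ LinearMap.ker K.mulVecLin)
    (hS : LinearMap.ker S.mulVecLin ≤ LinearMap.ker Kᴴ.mulVecLin) :
    ∃ J : Matrix q p 𝕜, Sᴴ * J * R = K := by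
  obtain ⟨G, hG⟩ := R.exists_mul_mul_eq_self
  obtain ⟨G', hG'⟩ := S.exists_mul_mul_eq_self
  have hK : Sᴴ * G'ᴴ * K = K := by
    simpa [Matrix.mul_assoc] using congr($(mul_mul_eq_of_ker_le hG' hS)ᴴ)
  refine ⟨G'ᴴ * K * G, ?_⟩
  rw [← Matrix.mul_assoc, ← Matrix.mul_assoc, hK, mul_mul_eq_of_ker_le hG hR]

end Field

section RCLike

variable {n 𝕜 : Type*} [Fintype n] [RCLike 𝕜]

def PosDefOn (A : Matrix n n 𝕜) (V : Submodule 𝕜 (n → 𝕜)) : Prop :=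
  ∀ x ∈ V, x ≠ 0 → 0 < star x ⬝ᵥ (A *ᵥ x)

theorem PosDefOn.nonneg {A : Matrix n n 𝕜} {V : Submodule 𝕜 (n → 𝕜)} (hA : A.PosDefOn V)
    {x : n → 𝕜} (hx : x ∈ V) : 0 ≤ star x ⬝ᵥ (A *ᵥ x) := by
  rcases eq_or_ne x 0 with rfl | hx₀
  · simp
  · exact (hA x hx hx₀).le

theorem PosDefOn.eq_zero_of_dotProduct_mulVec_eq_zero {A : Matrix n n 𝕜} {V : Submodule 𝕜 (n → 𝕜)}
    (hA : A.PosDefOn V) {x : n → 𝕜} (hx : x ∈ V) (h : star x ⬝ᵥ (A *ᵥ x) = 0) : x = 0 := by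
  by_contra hx₀
  exact (hA x hx hx₀).ne' h

theorem star_dotProduct_conjTranspose_mul_mul_mulVec {m : Type*} [Fintype m] (A : Matrix m m 𝕜)
    (B : Matrix m n 𝕜) (x : n → 𝕜) :
    star x ⬝ᵥ ((Bᴴ * A * B) *ᵥ x) = star (B *ᵥ x) ⬝ᵥ (A *ᵥ (B *ᵥ x)) := by
  rw [star_mulVec, ← dotProduct_mulVec, mulVec_mulVec, mulVec_mulVec, Matrix.mul_assoc]

theorem posDef_conjTranspose_mul_mul_iff {k : Type*} [Fintype k] {A : Matrix n n 𝕜}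
    (hA : A.IsHermitian) {B : Matrix n k 𝕜}
    (hB : Function.Injective B.mulVecLin) :
    (Bᴴ * A * B).PosDef ↔ A.PosDefOn (LinearMap.range B.mulVecLin) := by
  rw [posDef_iff_dotProduct_mulVec]
  simp only [isHermitian_conjTranspose_mul_mul B hA, true_and,
    star_dotProduct_conjTranspose_mul_mul_mulVec, PosDefOn, LinearMap.mem_range, mulVecLin_apply,
    forall_exists_index, forall_apply_eq_imp_iff]
  exact forall_congr' fun x ↦ by rw [← hB.ne_iff' (map_zero _), mulVecLin_apply]

/-- The `A`-orthogonal projection onto `V`, namely `M (Mᴴ A M)⁻¹ Mᴴ A` for a basis matrix `M`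
of `V`. -/
theorem PosDefOn.exists_orthogonal_proj [DecidableEq n] {A : Matrix n n 𝕜} (hA : A.IsHermitian)
    {V : Submodule 𝕜 (n → 𝕜)} (hV : A.PosDefOn V) :
    ∃ P : Matrix n n 𝕜, LinearMap.range P.mulVecLin ≤ V ∧ (∀ v ∈ V, P *ᵥ v = v) ∧
      Pᴴ * A * (1 - P) = 0 := by
  obtain ⟨d, M, hMinj, rfl⟩ := exists_injective_mulVecLin_range_eq V
  set G := Mᴴ * A * M
  have hG : IsUnit G.det := (isUnit_iff_isUnit_det G).mp
    ((posDef_conjTranspose_mul_mul_iff hA hMinj).mpr hV).isUnit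
  have hMA : Mᴴ * A * (1 - M * G⁻¹ * Mᴴ * A) = 0 := by
    rw [Matrix.mul_sub, Matrix.mul_one, sub_eq_zero]
    simp only [← Matrix.mul_assoc]
    rw [mul_nonsing_inv G hG, Matrix.one_mul]
  refine ⟨M * G⁻¹ * Mᴴ * A, ?_, fun v hv ↦ ?_, ?_⟩
  · rintro _ ⟨x, rfl⟩
    exact ⟨(G⁻¹ * Mᴴ * A) *ᵥ x, by simp [Matrix.mul_assoc]⟩
  · obtain ⟨c, rfl⟩ := hv
    have hGG : Mᴴ * (A * M) = G := (Matrix.mul_assoc _ _ _).symm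
    simp only [mulVecLin_apply, mulVec_mulVec, Matrix.mul_assoc]
    rw [hGG, nonsing_inv_mul G hG, Matrix.mul_one]
  · simp only [conjTranspose_mul, Matrix.mul_assoc] at hMA ⊢
    rw [hMA, Matrix.mul_zero, Matrix.mul_zero, Matrix.mul_zero]

theorem posDef_add_conjTranspose_mul_mul_of_add_eq_one [DecidableEq n] {A : Matrix n n 𝕜}
    (hA : A.IsHermitian) {U W : Submodule 𝕜 (n → 𝕜)} (hU : A.PosDefOn U) (hW : A.PosDefOn W)
    {P Q₂ Q₃ Q₄ : Matrix n n 𝕜} (hP : LinearMap.range P.mulVecLin ≤ U)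
    (hQ₂ : LinearMap.range Q₂.mulVecLin ≤ U) (hQ₃ : LinearMap.range Q₃.mulVecLin ≤ W)
    (hsum : P + Q₂ + Q₃ + Q₄ = 1) :
    (Pᴴ * A * P + Q₂ᴴ * A * Q₂ + Q₃ᴴ * A * Q₃ + Q₄ᴴ * Q₄).PosDef := by
  refine .of_dotProduct_mulVec_pos (((isHermitian_conjTranspose_mul_mul P hA).add
    (isHermitian_conjTranspose_mul_mul Q₂ hA)).add (isHermitian_conjTranspose_mul_mul Q₃ hA) |>.add
    (isHermitian_conjTranspose_mul_self Q₄)) fun x hx ↦ ?_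
  have hPx : P *ᵥ x ∈ U := hP ⟨x, rfl⟩
  have hQ₂x : Q₂ *ᵥ x ∈ U := hQ₂ ⟨x, rfl⟩
  have hQ₃x : Q₃ *ᵥ x ∈ W := hQ₃ ⟨x, rfl⟩
  have hQ₄ : star x ⬝ᵥ ((Q₄ᴴ * Q₄) *ᵥ x) = star (Q₄ *ᵥ x) ⬝ᵥ (Q₄ *ᵥ x) := by
    simpa using star_dotProduct_conjTranspose_mul_mul_mulVec 1 Q₄ x
  simp only [add_mulVec, dotProduct_add, star_dotProduct_conjTranspose_mul_mul_mulVec, hQ₄]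
  have h₁ := hU.nonneg hPx
  have h₂ := hU.nonneg hQ₂x
  have h₃ := hW.nonneg hQ₃x
  have h₄ := dotProduct_star_self_nonneg (Q₄ *ᵥ x)
  refine lt_of_le_of_ne (by positivity) fun h ↦ hx ?_
  rw [eq_comm, add_eq_zero_iff_of_nonneg (by positivity) h₄,
    add_eq_zero_iff_of_nonneg (by positivity) h₃, add_eq_zero_iff_of_nonneg h₁ h₂] at h
  obtain ⟨⟨⟨e₁, e₂⟩, e₃⟩, e₄⟩ := h
  calc x = (P + Q₂ + Q₃ + Q₄) *ᵥ x := by rw [hsum, one_mulVec]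
    _ = 0 := by
      rw [add_mulVec, add_mulVec, add_mulVec, hU.eq_zero_of_dotProduct_mulVec_eq_zero hPx e₁,
        hU.eq_zero_of_dotProduct_mulVec_eq_zero hQ₂x e₂,
        hW.eq_zero_of_dotProduct_mulVec_eq_zero hQ₃x e₃, dotProduct_star_self_eq_zero.mp e₄]
      simp

/-- `K` cancels the blocks `(2,3)`, `(2,4)`, `(4,3)` of `A` and their adjoints, and turns the
`(4,4)` block into `1`; the cross terms with the `P`-block vanish by `A`-orthogonality. -/
theorem exists_posDef_add_add_conjTranspose_of_add_eq_one [DecidableEq n] {A : Matrix n n 𝕜}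
    (hA : A.IsHermitian) {U W : Submodule 𝕜 (n → 𝕜)} (hU : A.PosDefOn U) (hW : A.PosDefOn W)
    {P Q₂ Q₃ Q₄ : Matrix n n 𝕜} (hP : LinearMap.range P.mulVecLin ≤ U)
    (hQ₂ : LinearMap.range Q₂.mulVecLin ≤ U) (hQ₃ : LinearMap.range Q₃.mulVecLin ≤ W)
    (hUQ : U ≤ LinearMap.ker Q₃.mulVecLin ⊓ LinearMap.ker Q₄.mulVecLin)
    (hWQ : W ≤ LinearMap.ker Q₂.mulVecLin ⊓ LinearMap.ker Q₄.mulVecLin)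
    (hsum : P + Q₂ + Q₃ + Q₄ = 1) (horth : Pᴴ * A * (1 - P) = 0) :
    ∃ K : Matrix n n 𝕜, U ≤ LinearMap.ker K.mulVecLin ∧ W ≤ LinearMap.ker Kᴴ.mulVecLin ∧
      (A + K + Kᴴ).PosDef := by
  set K := -(Q₂ᴴ * A * Q₃ + Q₂ᴴ * A * Q₄ + Q₄ᴴ * A * Q₃) + (2⁻¹ : 𝕜) • (Q₄ᴴ * (1 - A) * Q₄)
  have hKH : Kᴴ = -(Q₃ᴴ * A * Q₂ + Q₄ᴴ * A * Q₂ + Q₃ᴴ * A * Q₄) +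
      (2⁻¹ : 𝕜) • (Q₄ᴴ * (1 - A) * Q₄) := by
    simp [K, conjTranspose_mul, hA.eq, Matrix.mul_assoc]
  have horth' : (1 - P)ᴴ * A * P = 0 := by
    simpa [conjTranspose_mul, hA.eq, Matrix.mul_assoc] using congr($(horth)ᴴ)
  have hQ : 1 - P = Q₂ + Q₃ + Q₄ := by rw [← hsum]; abel
  have hsplit : A = Pᴴ * A * P + (Q₂ + Q₃ + Q₄)ᴴ * A * (Q₂ + Q₃ + Q₄) := by
    calc A = (P + (1 - P))ᴴ * A * (P + (1 - P)) := by simp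
      _ = Pᴴ * A * P + Pᴴ * A * (1 - P) + (1 - P)ᴴ * A * P + (1 - P)ᴴ * A * (1 - P) := by
        simp only [conjTranspose_add, Matrix.add_mul, Matrix.mul_add]; abel
      _ = _ := by rw [horth, horth', add_zero, add_zero, hQ]
  refine ⟨K, fun u hu ↦ ?_, fun w hw ↦ ?_, ?_⟩
  · obtain ⟨h₃, h₄⟩ := Submodule.mem_inf.mp (hUQ hu)
    simp only [LinearMap.mem_ker, mulVecLin_apply] at h₃ h₄ ⊢
    simp [K, add_mulVec, neg_mulVec, smul_mulVec, ← mulVec_mulVec, h₃, h₄]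
  · obtain ⟨h₂, h₄⟩ := Submodule.mem_inf.mp (hWQ hw)
    simp only [LinearMap.mem_ker, mulVecLin_apply] at h₂ h₄ ⊢
    simp [hKH, add_mulVec, neg_mulVec, smul_mulVec, ← mulVec_mulVec, h₂, h₄]
  · have hN : A + K + Kᴴ = Pᴴ * A * P + Q₂ᴴ * A * Q₂ + Q₃ᴴ * A * Q₃ + Q₄ᴴ * Q₄ := by
      nth_rewrite 1 [hsplit]
      rw [hKH]
      simp only [K, conjTranspose_add, Matrix.add_mul, Matrix.mul_add, Matrix.mul_sub,
        Matrix.sub_mul, Matrix.mul_one]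
      module
    rw [hN]
    exact posDef_add_conjTranspose_mul_mul_of_add_eq_one hA hU hW hP hQ₂ hQ₃ hsum

theorem exists_posDef_add_add_conjTranspose [DecidableEq n] {A : Matrix n n 𝕜}
    (hA : A.IsHermitian) {U W : Submodule 𝕜 (n → 𝕜)} (hU : A.PosDefOn U) (hW : A.PosDefOn W) :
    ∃ K : Matrix n n 𝕜, U ≤ LinearMap.ker K.mulVecLin ∧ W ≤ LinearMap.ker Kᴴ.mulVecLin ∧
      (A + K + Kᴴ).PosDef := by
  obtain ⟨P, hPmem, hPfix, horth⟩ :=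
    PosDefOn.exists_orthogonal_proj hA (fun x hx ↦ hU x hx.1 : A.PosDefOn (U ⊓ W))
  obtain ⟨p₂, p₃, p₄, hp₂, hp₃, hpU, hpW, hrem⟩ := Submodule.exists_projections U W
  have hQ (p : (n → 𝕜) →ₗ[𝕜] n → 𝕜) (x : n → 𝕜) :
      ((1 - P) * LinearMap.toMatrix' p) *ᵥ x = p x - P *ᵥ p x := by
    rw [← mulVec_mulVec, LinearMap.toMatrix'_mulVec, sub_mulVec, one_mulVec]
  refine exists_posDef_add_add_conjTranspose_of_add_eq_one hA hU hW
    (Q₂ := (1 - P) * LinearMap.toMatrix' p₂) (Q₃ := (1 - P) * LinearMap.toMatrix' p₃)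
    (Q₄ := (1 - P) * LinearMap.toMatrix' p₄) ?_ ?_ ?_ ?_ ?_ ?_ horth
  · exact hPmem.trans inf_le_left
  · rintro _ ⟨x, rfl⟩
    rw [mulVecLin_apply, hQ]
    exact sub_mem (hp₂ x) (hPmem ⟨_, rfl⟩).1
  · rintro _ ⟨x, rfl⟩
    rw [mulVecLin_apply, hQ]
    exact sub_mem (hp₃ x) (hPmem ⟨_, rfl⟩).2
  · exact fun u hu ↦ ⟨by simp [(hpU u hu).1], by simp [(hpU u hu).2]⟩
  · exact fun w hw ↦ ⟨by simp [(hpW w hw).1], by simp [(hpW w hw).2]⟩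
  · refine ext_iff_mulVec.mpr fun x ↦ ?_
    have hfix := hPfix _ (hrem x)
    simp only [mulVec_sub] at hfix
    simp only [add_mulVec, hQ, one_mulVec]
    linear_combination hfix

end RCLike

end Matrix

/-- **Finsler's lemma II** (Gahinet–Apkarian). -/
theorem finsler_lemma_II {n p q kR kS : Type*} [Fintype n] [Fintype p] [Fintype q]
    [Fintype kR] [Fintype kS]
    (H : Matrix n n ℂ) (hH : H.IsHermitian)
    (R : Matrix p n ℂ) (S : Matrix q n ℂ)
    (Rp : Matrix n kR ℂ) (Sp : Matrix n kS ℂ)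
    (hRinj : Function.Injective Rp.mulVecLin)
    (hRrange : LinearMap.range Rp.mulVecLin = LinearMap.ker R.mulVecLin)
    (hSinj : Function.Injective Sp.mulVecLin)
    (hSrange : LinearMap.range Sp.mulVecLin = LinearMap.ker S.mulVecLin) :
    (∃ J : Matrix q p ℂ, (-(H + Rᴴ * Jᴴ * S + Sᴴ * J * R)).PosDef) ↔
      ((-(Rpᴴ * H * Rp)).PosDef ∧ (-(Spᴴ * H * Sp)).PosDef) := by
  classical
  have hRRp : R * Rp = 0 := mul_eq_zero_of_range_le_ker hRrange.le
  have hSSp : S * Sp = 0 := mul_eq_zero_of_range_le_ker hSrange.le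
  constructor
  · rintro ⟨J, hJ⟩
    constructor
    · have h := hJ.conjTranspose_mul_mul_same hRinj
      rwa [Matrix.mul_neg, Matrix.neg_mul, conjTranspose_mul_add_add_mul_of_mul_eq_zero (.inl hRRp)]
        at h
    · have h := hJ.conjTranspose_mul_mul_same hSinj
      rwa [Matrix.mul_neg, Matrix.neg_mul, conjTranspose_mul_add_add_mul_of_mul_eq_zero (.inr hSSp)]
        at h
  · rintro ⟨hR, hS⟩
    rw [← Matrix.neg_mul, ← Matrix.mul_neg, posDef_conjTranspose_mul_mul_iff hH.neg hRinj,
      hRrange] at hR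
    rw [← Matrix.neg_mul, ← Matrix.mul_neg, posDef_conjTranspose_mul_mul_iff hH.neg hSinj,
      hSrange] at hS
    obtain ⟨K, hKR, hKS, hK⟩ := exists_posDef_add_add_conjTranspose hH.neg hR hS
    obtain ⟨J, rfl⟩ := exists_conjTranspose_mul_mul_eq hKR hKS
    refine ⟨-J, ?_⟩
    have hJ : -(H + Rᴴ * (-J)ᴴ * S + Sᴴ * -J * R) = -H + Sᴴ * J * R + (Sᴴ * J * R)ᴴ := by
      simp only [conjTranspose_neg, conjTranspose_mul, conjTranspose_conjTranspose,
        Matrix.mul_neg, Matrix.neg_mul, Matrix.mul_assoc]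
      abel
    rw [hJ]
    exact hK
end

section
/- Let A be a commutative integral domain with quotient field K and suppose K* stabilizes G = [[G₁₁,G₁₂],[G₂₁,G₂₂]]. With V* = K*(I - G₂₂K*)⁻¹ and any Q of the form Q = L̃ Λ L with Λ a matrix over A, where L̃ = [(I-K*G₂₂)⁻¹, -(I-K*G₂₂)⁻¹K*] and L = [-K*(I-G₂₂K*)⁻¹; (I-G₂₂K*)⁻¹], the matrix [G₁₂; I; G₂₂] Q [G₂₁, G₂₂, I] has all entries in A. -/
/-!
The push-through identities `(I - K G₂₂)⁻¹ K = K (I - G₂₂ K)⁻¹` and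
`(I - K G₂₂)⁻¹ = I + K (I - G₂₂ K)⁻¹ G₂₂` rewrite every block of `[G₁₂; I; G₂₂] L̃` and of
`L [G₂₁, G₂₂, I]` as one of the nine stable blocks of `Θ(G, K*)`, up to adding or subtracting `I`.
Each block of `[G₁₂; I; G₂₂] Q [G₂₁, G₂₂, I]` is then a product of a stable left factor,
`Λ`, and a stable right factor.
-/

open Matrix

/-- A matrix over the fraction field of `R` is *stable* if all its entries lie in
the image of `R`. -/
def stableMat (R : Type*) [CommRing R] {a b : Type*}
    (M : Matrix a b (FractionRing R)) : Prop :=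
  ∀ i j, M i j ∈ Set.range (algebraMap R (FractionRing R))

namespace stableMat

variable {R : Type*} [CommRing R] {a b c : Type*}

theorem iff_mem_range {M : Matrix a b (FractionRing R)} :
    stableMat R M ↔ ∀ i j, M i j ∈ (algebraMap R (FractionRing R)).range := by
  simp only [stableMat, ← RingHom.coe_range, SetLike.mem_coe]

theorem one [DecidableEq a] : stableMat R (1 : Matrix a a (FractionRing R)) :=
  iff_mem_range.2 fun i j => by
    rw [one_apply]; split_ifs
    exacts [one_mem _, zero_mem _]

theorem neg {M : Matrix a b (FractionRing R)} (hM : stableMat R M) : stableMat R (-M) :=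
  iff_mem_range.2 fun i j => neg_mem (iff_mem_range.1 hM i j)

theorem sub {M N : Matrix a b (FractionRing R)} (hM : stableMat R M) (hN : stableMat R N) :
    stableMat R (M - N) :=
  iff_mem_range.2 fun i j => sub_mem (iff_mem_range.1 hM i j) (iff_mem_range.1 hN i j)

theorem mul [Fintype b] {M : Matrix a b (FractionRing R)} {N : Matrix b c (FractionRing R)}
    (hM : stableMat R M) (hN : stableMat R N) : stableMat R (M * N) :=
  iff_mem_range.2 fun i j => Subring.sum_mem _ fun k _ =>
    mul_mem (iff_mem_range.1 hM i k) (iff_mem_range.1 hN k j)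

theorem fromCols {M : Matrix a b (FractionRing R)} {N : Matrix a c (FractionRing R)}
    (hM : stableMat R M) (hN : stableMat R N) : stableMat R (Matrix.fromCols M N) := by
  rintro i (j | j)
  exacts [hM i j, hN i j]

theorem fromRows {M : Matrix a c (FractionRing R)} {N : Matrix b c (FractionRing R)}
    (hM : stableMat R M) (hN : stableMat R N) : stableMat R (Matrix.fromRows M N) := by
  rintro (i | i) j
  exacts [hM i j, hN i j]

end stableMat

namespace Matrix

variable {m n α : Type*} [Fintype m] [Fintype n] [DecidableEq m] [DecidableEq n] [CommRing α]

theorem inv_one_sub_eq_one_add_mul {A : Matrix n n α} (h : IsUnit (1 - A).det) :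
    (1 - A)⁻¹ = 1 + A * (1 - A)⁻¹ := by
  have := mul_nonsing_inv _ h
  rw [Matrix.sub_mul, Matrix.one_mul, sub_eq_iff_eq_add'] at this
  exact this.trans (add_comm _ _)

theorem inv_one_sub_eq_one_add_inv_mul {A : Matrix n n α} (h : IsUnit (1 - A).det) :
    (1 - A)⁻¹ = 1 + (1 - A)⁻¹ * A := by
  have := nonsing_inv_mul _ h
  rw [Matrix.mul_sub, Matrix.mul_one, sub_eq_iff_eq_add'] at this
  exact this.trans (add_comm _ _)

variable {G : Matrix m n α} {K : Matrix n m α}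

theorem inv_one_sub_mul_comm_mul (h : IsUnit (1 - G * K).det) :
    (1 - K * G)⁻¹ * K = K * (1 - G * K)⁻¹ := by
  have h' : IsUnit (1 - K * G).det := by rwa [det_one_sub_mul_comm]
  have push : K * (1 - G * K) = (1 - K * G) * K := by
    rw [Matrix.mul_sub, Matrix.sub_mul, Matrix.mul_one, Matrix.one_mul, Matrix.mul_assoc]
  calc (1 - K * G)⁻¹ * K = (1 - K * G)⁻¹ * (K * ((1 - G * K) * (1 - G * K)⁻¹)) := by
        rw [mul_nonsing_inv _ h, Matrix.mul_one]
    _ = (1 - K * G)⁻¹ * ((1 - K * G) * (K * (1 - G * K)⁻¹)) := by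
        rw [← Matrix.mul_assoc K, push, Matrix.mul_assoc]
    _ = K * (1 - G * K)⁻¹ := nonsing_inv_mul_cancel_left _ _ h'

theorem inv_one_sub_mul_comm (h : IsUnit (1 - G * K).det) :
    (1 - K * G)⁻¹ = 1 + K * (1 - G * K)⁻¹ * G := by
  have h' : IsUnit (1 - K * G).det := by rwa [det_one_sub_mul_comm]
  rw [inv_one_sub_eq_one_add_inv_mul h', ← Matrix.mul_assoc, inv_one_sub_mul_comm_mul h]

end Matrix

/-- All nine block entries of the closed-loop transfer matrix `Θ(G,K)` are
stable, where `U = (I - G₂₂ K)⁻¹` and `V = K U`. -/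
def ThetaStable (R : Type*) [CommRing R] [IsDomain R]
    {nW nZ nY nU : Type*} [Fintype nY] [Fintype nU] [DecidableEq nY] [DecidableEq nU]
    (G₁₁ : Matrix nZ nW (FractionRing R)) (G₁₂ : Matrix nZ nU (FractionRing R))
    (G₂₁ : Matrix nY nW (FractionRing R)) (G₂₂ : Matrix nY nU (FractionRing R))
    (K : Matrix nU nY (FractionRing R)) : Prop :=
  stableMat R (G₁₁ + G₁₂ * (K * (1 - G₂₂ * K)⁻¹) * G₂₁) ∧
  stableMat R (G₁₂ + G₁₂ * (K * (1 - G₂₂ * K)⁻¹) * G₂₂) ∧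
  stableMat R (G₁₂ * (K * (1 - G₂₂ * K)⁻¹)) ∧
  stableMat R ((K * (1 - G₂₂ * K)⁻¹) * G₂₁) ∧
  stableMat R (1 + (K * (1 - G₂₂ * K)⁻¹) * G₂₂) ∧
  stableMat R (K * (1 - G₂₂ * K)⁻¹) ∧
  stableMat R ((1 - G₂₂ * K)⁻¹ * G₂₁) ∧
  stableMat R ((1 - G₂₂ * K)⁻¹ * G₂₂) ∧
  stableMat R ((1 - G₂₂ * K)⁻¹)

-- `paramLeft G K` and `paramRight G K` are the paper's `L̃` and `L`.
noncomputable def paramLeft {m n α : Type*} [Fintype m] [Fintype n] [DecidableEq n] [CommRing α]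
    (G : Matrix m n α) (K : Matrix n m α) : Matrix n (n ⊕ m) α :=
  fromCols (1 - K * G : Matrix n n α)⁻¹ (-((1 - K * G : Matrix n n α)⁻¹ * K))

noncomputable def paramRight {m n α : Type*} [Fintype m] [Fintype n] [DecidableEq m] [CommRing α]
    (G : Matrix m n α) (K : Matrix n m α) : Matrix (n ⊕ m) m α :=
  fromRows (-(K * (1 - G * K : Matrix m m α)⁻¹)) (1 - G * K : Matrix m m α)⁻¹

namespace ThetaStable

variable {R : Type*} [CommRing R] [IsDomain R]
  {nW nZ nY nU : Type*} [Fintype nY] [Fintype nU] [DecidableEq nY] [DecidableEq nU]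
  {G₁₁ : Matrix nZ nW (FractionRing R)} {G₁₂ : Matrix nZ nU (FractionRing R)}
  {G₂₁ : Matrix nY nW (FractionRing R)} {G₂₂ : Matrix nY nU (FractionRing R)}
  {K : Matrix nU nY (FractionRing R)}

theorem stableMat_mul_paramLeft (hstab : ThetaStable R G₁₁ G₁₂ G₂₁ G₂₂ K)
    (hdet : (1 - G₂₂ * K).det ≠ 0) :
    stableMat R (G₁₂ * paramLeft G₂₂ K) ∧ stableMat R (paramLeft G₂₂ K) ∧
      stableMat R (G₂₂ * paramLeft G₂₂ K) := by
  obtain ⟨-, h₂, h₃, -, h₅, h₆, -, h₈, h₉⟩ := hstab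
  have hunit : IsUnit (1 - G₂₂ * K).det := isUnit_iff_ne_zero.2 hdet
  set U := (1 - G₂₂ * K)⁻¹
  have hU : 1 + G₂₂ * K * U = U := (inv_one_sub_eq_one_add_mul hunit).symm
  have hL : paramLeft G₂₂ K = fromCols (1 + K * U * G₂₂) (-(K * U)) := by
    rw [paramLeft, inv_one_sub_mul_comm_mul hunit, inv_one_sub_mul_comm hunit]
  have hG₂₂U : G₂₂ * (1 + K * U * G₂₂) = U * G₂₂ :=
    calc G₂₂ * (1 + K * U * G₂₂) = (1 + G₂₂ * K * U) * G₂₂ := by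
          simp only [Matrix.mul_add, Matrix.add_mul, Matrix.mul_one, Matrix.one_mul,
            Matrix.mul_assoc]
      _ = U * G₂₂ := by rw [hU]
  have hG₂₂KU : G₂₂ * (K * U) = U - 1 := by
    rw [← Matrix.mul_assoc, eq_sub_iff_add_eq', hU]
  refine ⟨?_, ?_, ?_⟩ <;> rw [hL]
  · rw [mul_fromCols, Matrix.mul_add, Matrix.mul_one, ← Matrix.mul_assoc, Matrix.mul_neg]
    exact h₂.fromCols h₃.neg
  · exact h₅.fromCols h₆.neg
  · rw [mul_fromCols, hG₂₂U, Matrix.mul_neg, hG₂₂KU]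
    exact h₈.fromCols (h₉.sub stableMat.one).neg

theorem stableMat_paramRight_mul (hstab : ThetaStable R G₁₁ G₁₂ G₂₁ G₂₂ K) :
    stableMat R (paramRight G₂₂ K * G₂₁) ∧ stableMat R (paramRight G₂₂ K) ∧
      stableMat R (paramRight G₂₂ K * G₂₂) := by
  obtain ⟨-, -, -, h₄, h₅, h₆, h₇, h₈, h₉⟩ := hstab
  refine ⟨?_, h₆.neg.fromRows h₉, ?_⟩ <;> rw [paramRight, fromRows_mul, Matrix.neg_mul]
  · exact h₄.neg.fromRows h₇
  · rw [← add_sub_cancel_left 1 (K * (1 - G₂₂ * K)⁻¹ * G₂₂)]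
    exact (h₅.sub stableMat.one).neg.fromRows h₈

end ThetaStable

/-- Free parametrization of the admissible set `Ω`: if `K*` stabilizes `G` and
`Q = L̃ Λ L` with `Λ` stable, then all nine entries of
`[G₁₂; I; G₂₂] Q [G₂₁, G₂₂, I]` are stable. -/
theorem free_param_admissible_set {R : Type*} [CommRing R] [IsDomain R]
    {nW nZ nY nU : Type*} [Fintype nY] [Fintype nU] [DecidableEq nY] [DecidableEq nU]
    (G₁₁ : Matrix nZ nW (FractionRing R)) (G₁₂ : Matrix nZ nU (FractionRing R))
    (G₂₁ : Matrix nY nW (FractionRing R)) (G₂₂ : Matrix nY nU (FractionRing R))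
    (Ks : Matrix nU nY (FractionRing R))
    (hdets : (1 - G₂₂ * Ks).det ≠ 0)
    (hstab : ThetaStable R G₁₁ G₁₂ G₂₁ G₂₂ Ks)
    (Λ : Matrix (nU ⊕ nY) (nU ⊕ nY) (FractionRing R))
    (hΛ : stableMat R Λ)
    (Q : Matrix nU nY (FractionRing R))
    (hQ : Q = (Matrix.fromCols ((1 - Ks * G₂₂)⁻¹)
          (-((1 - Ks * G₂₂)⁻¹ * Ks))) * Λ *
        (Matrix.fromRows (-(Ks * (1 - G₂₂ * Ks)⁻¹)) ((1 - G₂₂ * Ks)⁻¹))) :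
    stableMat R (G₁₂ * Q * G₂₁) ∧ stableMat R (G₁₂ * Q * G₂₂) ∧
      stableMat R (G₁₂ * Q) ∧ stableMat R (Q * G₂₁) ∧ stableMat R (Q * G₂₂) ∧
      stableMat R Q ∧ stableMat R (G₂₂ * Q * G₂₁) ∧
      stableMat R (G₂₂ * Q * G₂₂) ∧ stableMat R (G₂₂ * Q) := by
  obtain ⟨hLeft₁₂, hLeft, hLeft₂₂⟩ := hstab.stableMat_mul_paramLeft hdets
  obtain ⟨hRight₂₁, hRight, hRight₂₂⟩ := hstab.stableMat_paramRight_mul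
  replace hQ : Q = paramLeft G₂₂ Ks * Λ * paramRight G₂₂ Ks := hQ
  subst hQ
  exact ⟨by simpa only [Matrix.mul_assoc] using (hLeft₁₂.mul hΛ).mul hRight₂₁,
    by simpa only [Matrix.mul_assoc] using (hLeft₁₂.mul hΛ).mul hRight₂₂,
    by simpa only [Matrix.mul_assoc] using (hLeft₁₂.mul hΛ).mul hRight,
    by simpa only [Matrix.mul_assoc] using (hLeft.mul hΛ).mul hRight₂₁,
    by simpa only [Matrix.mul_assoc] using (hLeft.mul hΛ).mul hRight₂₂,
    (hLeft.mul hΛ).mul hRight,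
    by simpa only [Matrix.mul_assoc] using (hLeft₂₂.mul hΛ).mul hRight₂₁,
    by simpa only [Matrix.mul_assoc] using (hLeft₂₂.mul hΛ).mul hRight₂₂,
    by simpa only [Matrix.mul_assoc] using (hLeft₂₂.mul hΛ).mul hRight⟩
end
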